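/- For each natural number n \ge 1 and each \varepsilon > 0 there is a constant R > 0 (depending on n and \varepsilon) such that for every natural number k and every polynomial p(t) = \sum_{|\alpha| \le k} c_\alpha t^\alpha on \mathbb{R}^n of total degree at most k with complex coefficients, one has \max_\alpha |c_\alpha| \le R^k \cdot \sup\{|p(t)| : t \in \mathbb{R}^n, |t_1| \le \varepsilon, \dots, |t_n| \le \varepsilon\}. -/

import Mathlib

/-!
In one variable, Lagrange interpolation at the `k + 1` equally spaced nodes `ε j / (k + 1)`
writes each coefficient of `p` as a combination of the values `p(ε j / (k + 1))`. The `j`-th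
weight is at most `((1 + ε) (k + 1) / ε) ^ k / (j! (k - j)!)`, and these sum to
`2 ^ k ((1 + ε) (k + 1) / ε) ^ k / k! ≤ (4 e (1 + ε) / ε) ^ k`. In `n` variables, induct on `n`,
viewing `p` as a polynomial in its first variable whose coefficients are polynomials in the
others; this gives `R = (4 e (1 + ε) / ε) ^ n`.
-/

open Polynomial Finset Nat

theorem Polynomial.norm_coeff_prod_X_sub_C_le {R ι : Type*} [SeminormedCommRing R]
    [NormOneClass R] (s : Finset ι) (a : ι → R) (m : ℕ) :
    ‖(∏ j ∈ s, (X - C (a j))).coeff m‖ ≤ ∏ j ∈ s, (1 + ‖a j‖) := by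
  classical
  induction s using Finset.induction generalizing m with
  | empty => rw [prod_empty, prod_empty, coeff_one]; split_ifs <;> simp
  | insert i s hi ih =>
    set q := ∏ j ∈ s, (X - C (a j))
    have hXq : ‖(X * q).coeff m‖ ≤ ∏ j ∈ s, (1 + ‖a j‖) := by
      cases m with
      | zero => simpa using prod_nonneg fun j _ => by positivity
      | succ m => simpa only [coeff_X_mul] using ih m
    rw [prod_insert hi, prod_insert hi, sub_mul, coeff_sub, coeff_C_mul]
    calc ‖(X * q).coeff m - a i * q.coeff m‖
        ≤ ∏ j ∈ s, (1 + ‖a j‖) + ‖a i‖ * ∏ j ∈ s, (1 + ‖a j‖) :=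
          (norm_sub_le _ _).trans
            (add_le_add hXq ((norm_mul_le _ _).trans (by gcongr; exact ih m)))
      _ = (1 + ‖a i‖) * ∏ j ∈ s, (1 + ‖a j‖) := by ring

theorem Lagrange.norm_coeff_basis_le {F ι : Type*} [NormedField F] [DecidableEq ι]
    (s : Finset ι) (v : ι → F) (i : ι) (m : ℕ) :
    ‖(Lagrange.basis s v i).coeff m‖ ≤ ∏ j ∈ s.erase i, (1 + ‖v j‖) / ‖v i - v j‖ := by
  have hbasis : Lagrange.basis s v i =
      C (∏ j ∈ s.erase i, (v i - v j)⁻¹) * ∏ j ∈ s.erase i, (X - C (v j)) := by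
    simp only [Lagrange.basis, Lagrange.basisDivisor, prod_mul_distrib, map_prod]
  rw [hbasis, coeff_C_mul, norm_mul, norm_prod, prod_div_distrib, div_eq_inv_mul,
    ← prod_inv_distrib]
  simp only [norm_inv]
  gcongr
  exact norm_coeff_prod_X_sub_C_le _ _ m

theorem Lagrange.norm_coeff_le_of_degree_lt {F ι : Type*} [NormedField F] [DecidableEq ι]
    {s : Finset ι} {v : ι → F} (hvs : Set.InjOn v s) {f : F[X]} (hf : f.degree < #s) (m : ℕ) :
    ‖f.coeff m‖ ≤ ∑ i ∈ s, ‖f.eval (v i)‖ * ∏ j ∈ s.erase i, (1 + ‖v j‖) / ‖v i - v j‖ := by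
  conv_lhs => rw [Lagrange.eq_interpolate hvs hf, Lagrange.interpolate_apply, finsetSum_coeff]
  refine (norm_sum_le _ _).trans (sum_le_sum fun i _ => ?_)
  rw [coeff_C_mul, norm_mul]
  gcongr
  exact Lagrange.norm_coeff_basis_le s v i m

theorem prod_erase_range_abs_sub {i k : ℕ} (hi : i ≤ k) :
    ∏ j ∈ (range (k + 1)).erase i, |(i : ℝ) - j| = i ! * (k - i)! := by
  have hsplit : (range (k + 1)).erase i = range i ∪ Ico (i + 1) (k + 1) := by
    ext j; simp only [mem_erase, mem_range, mem_union, mem_Ico]; omega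
  rw [hsplit, prod_union (disjoint_left.2 fun j hj hj' => by simp at hj hj'; omega)]
  congr 1
  · calc ∏ j ∈ range i, |(i : ℝ) - j| = ∏ j ∈ range i, ((i - j : ℕ) : ℝ) :=
          prod_congr rfl fun j hj => by
            rw [mem_range] at hj
            rw [Nat.cast_sub hj.le, abs_of_nonneg (sub_nonneg.2 (by exact_mod_cast hj.le))]
      _ = i ! := by rw [← Nat.cast_prod, ← descFactorial_eq_prod_range, descFactorial_self]
  · calc ∏ j ∈ Ico (i + 1) (k + 1), |(i : ℝ) - j| = ∏ j ∈ range (k - i), ((j + 1 : ℕ) : ℝ) := by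
          rw [prod_Ico_eq_prod_range, show k + 1 - (i + 1) = k - i by omega]
          refine prod_congr rfl fun j _ => ?_
          push_cast
          rw [abs_sub_comm, abs_of_nonneg (by ring_nf; positivity)]
          ring
      _ = (k - i)! := by rw [← Nat.cast_prod, prod_range_add_one_eq_factorial]

theorem sum_range_inv_factorial_mul_factorial (k : ℕ) :
    ∑ i ∈ range (k + 1), ((i ! * (k - i)! : ℝ))⁻¹ = 2 ^ k / k ! := by
  have hterm : ∀ i ∈ range (k + 1), ((i ! * (k - i)! : ℝ))⁻¹ = k.choose i / k ! := by
    intro i hi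
    rw [Nat.cast_choose ℝ (Nat.lt_succ_iff.mp (mem_range.mp hi))]
    field_simp
  rw [sum_congr rfl hterm, ← sum_div, ← Nat.cast_sum, sum_range_choose]
  push_cast; rfl

theorem add_one_pow_div_factorial_le (k : ℕ) : ((k : ℝ) + 1) ^ k / k ! ≤ (2 * Real.exp 1) ^ k := by
  have hk : ((k : ℝ) + 1) ^ k ≤ 2 ^ k * (k : ℝ) ^ k := by
    rcases k.eq_zero_or_pos with rfl | hk
    · simp
    · rw [← mul_pow]; gcongr; have : (1 : ℝ) ≤ k := by exact_mod_cast hk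
      linarith
  calc ((k : ℝ) + 1) ^ k / k ! ≤ 2 ^ k * ((k : ℝ) ^ k / k !) := by
        rw [mul_div_assoc']; gcongr
    _ ≤ 2 ^ k * Real.exp k := by gcongr; exact Real.pow_div_factorial_le_exp _ k.cast_nonneg k
    _ = (2 * Real.exp 1) ^ k := by rw [mul_pow, ← Real.exp_one_pow]

theorem prod_erase_range_one_add_norm_div_norm_sub_le {c B : ℝ} (hc : 0 < c) {i k : ℕ}
    (hi : i ≤ k) (hB : c * k ≤ B) :
    ∏ j ∈ (range (k + 1)).erase i,
        (1 + ‖((c * j : ℝ) : ℂ)‖) / ‖((c * i : ℝ) : ℂ) - ((c * j : ℝ) : ℂ)‖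
      ≤ ((1 + B) / c) ^ k * (i ! * (k - i)! : ℝ)⁻¹ := by
  have hcard : #((range (k + 1)).erase i) = k := by
    simp [card_erase_of_mem (mem_range.mpr (Nat.lt_succ_of_le hi))]
  calc ∏ j ∈ (range (k + 1)).erase i,
        (1 + ‖((c * j : ℝ) : ℂ)‖) / ‖((c * i : ℝ) : ℂ) - ((c * j : ℝ) : ℂ)‖
      ≤ ∏ j ∈ (range (k + 1)).erase i, (1 + B) / c * |(i : ℝ) - j|⁻¹ := by
        refine prod_le_prod (fun j _ => by positivity) fun j hj => ?_
        have hjk : (j : ℝ) ≤ k := by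
          exact_mod_cast Nat.lt_succ_iff.mp (mem_range.mp (mem_of_mem_erase hj))
        have hdiff : ‖((c * i : ℝ) : ℂ) - ((c * j : ℝ) : ℂ)‖ = c * |(i : ℝ) - j| := by
          rw [← Complex.ofReal_sub, Complex.norm_real, Real.norm_eq_abs, ← mul_sub, abs_mul,
            abs_of_pos hc]
        calc (1 + ‖((c * j : ℝ) : ℂ)‖) / ‖((c * i : ℝ) : ℂ) - ((c * j : ℝ) : ℂ)‖
            = (1 + c * j) / c * |(i : ℝ) - j|⁻¹ := by
              rw [hdiff, Complex.norm_real, Real.norm_eq_abs, abs_of_nonneg (by positivity)]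
              ring
          _ ≤ (1 + B) / c * |(i : ℝ) - j|⁻¹ := by gcongr; nlinarith
    _ = ((1 + B) / c) ^ k * (i ! * (k - i)! : ℝ)⁻¹ := by
        rw [prod_mul_distrib, prod_const, hcard, prod_inv_distrib, prod_erase_range_abs_sub hi]

theorem Polynomial.norm_coeff_le_of_norm_eval_le {ε : ℝ} (hε : 0 < ε) {k : ℕ} {p : ℂ[X]}
    (hp : p.natDegree ≤ k) {S : ℝ} (hS : ∀ x : ℝ, |x| ≤ ε → ‖p.eval (x : ℂ)‖ ≤ S) (m : ℕ) :
    ‖p.coeff m‖ ≤ (4 * Real.exp 1 * (1 + ε) / ε) ^ k * S := by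
  set c := ε / (k + 1)
  have hc : 0 < c := by positivity
  have hck : c * k ≤ ε := by
    rw [div_mul_eq_mul_div, div_le_iff₀ (by positivity)]; nlinarith
  have hnode : ∀ j ∈ range (k + 1), |c * j| ≤ ε := fun j hj => by
    have hjk : (j : ℝ) ≤ k := by exact_mod_cast Nat.lt_succ_iff.mp (mem_range.mp hj)
    rw [abs_of_nonneg (by positivity)]; nlinarith
  have hS0 : 0 ≤ S := (norm_nonneg _).trans (by simpa using hS 0 (by simpa using hε.le))
  have hinj : Set.InjOn (fun j : ℕ => ((c * j : ℝ) : ℂ)) (range (k + 1)) :=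
    fun a _ b _ hab => by simpa [hc.ne'] using hab
  have hdeg : p.degree < #(range (k + 1)) := by
    rw [card_range]
    exact degree_le_natDegree.trans_lt (by exact_mod_cast Nat.lt_succ_of_le hp)
  calc ‖p.coeff m‖
      ≤ ∑ i ∈ range (k + 1), ‖p.eval ((c * i : ℝ) : ℂ)‖ * ∏ j ∈ (range (k + 1)).erase i,
          (1 + ‖((c * j : ℝ) : ℂ)‖) / ‖((c * i : ℝ) : ℂ) - ((c * j : ℝ) : ℂ)‖ :=
        Lagrange.norm_coeff_le_of_degree_lt hinj hdeg m
    _ ≤ ∑ i ∈ range (k + 1), S * (((1 + ε) / c) ^ k * (i ! * (k - i)! : ℝ)⁻¹) := by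
        gcongr with i hi
        · exact hS _ (hnode i hi)
        · exact prod_erase_range_one_add_norm_div_norm_sub_le hc
            (Nat.lt_succ_iff.mp (mem_range.mp hi)) hck
    _ = S * (2 * (1 + ε) / ε) ^ k * (((k : ℝ) + 1) ^ k / k !) := by
        have hc' : (1 + ε) / c = (1 + ε) / ε * (k + 1) := by simp only [c]; field_simp
        rw [← mul_sum, ← mul_sum, sum_range_inv_factorial_mul_factorial, hc', mul_pow,
          mul_div_assoc, mul_pow]
        ring
    _ ≤ S * (2 * (1 + ε) / ε) ^ k * (2 * Real.exp 1) ^ k := by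
        gcongr; exact add_one_pow_div_factorial_le k
    _ = (4 * Real.exp 1 * (1 + ε) / ε) ^ k * S := by
        rw [mul_assoc, ← mul_pow]; ring_nf

namespace MvPolynomial

theorem totalDegree_coeff_finSuccEquiv_le {R : Type*} [CommSemiring R] {n : ℕ}
    (f : MvPolynomial (Fin (n + 1)) R) (i : ℕ) :
    ((finSuccEquiv R n f).coeff i).totalDegree ≤ f.totalDegree := by
  by_cases h : (finSuccEquiv R n f).coeff i = 0
  · simp [h]
  · exact (Nat.le_add_right _ _).trans (totalDegree_coeff_finSuccEquiv_add_le f i h)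

theorem norm_eval_coeff_finSuccEquiv_le {ε : ℝ} (hε : 0 < ε) {n k : ℕ}
    {p : MvPolynomial (Fin (n + 1)) ℂ} (hp : p.degreeOf 0 ≤ k) {S : ℝ}
    (hS : ∀ t : Fin (n + 1) → ℝ, (∀ i, |t i| ≤ ε) → ‖eval (fun i => (t i : ℂ)) p‖ ≤ S)
    (i : ℕ) (s : Fin n → ℝ) (hs : ∀ j, |s j| ≤ ε) :
    ‖eval (fun j => (s j : ℂ)) ((finSuccEquiv ℂ n p).coeff i)‖ ≤
      (4 * Real.exp 1 * (1 + ε) / ε) ^ k * S := by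
  rw [← Polynomial.coeff_map]
  refine Polynomial.norm_coeff_le_of_norm_eval_le hε ?_ (fun x hx => ?_) i
  · exact natDegree_map_le.trans ((natDegree_finSuccEquiv p).trans_le hp)
  · rw [← eval_eq_eval_mv_eval', ← Function.comp_def Complex.ofReal s, ← Fin.comp_cons]
    exact hS (Fin.cons x s) (Fin.forall_fin_succ.2 ⟨hx, hs⟩)

theorem norm_coeff_le_of_norm_eval_le {ε : ℝ} (hε : 0 < ε) (n : ℕ) {k : ℕ}
    {p : MvPolynomial (Fin n) ℂ} (hp : p.totalDegree ≤ k) {S : ℝ}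
    (hS : ∀ t : Fin n → ℝ, (∀ i, |t i| ≤ ε) → ‖eval (fun i => (t i : ℂ)) p‖ ≤ S)
    (α : Fin n →₀ ℕ) :
    ‖coeff α p‖ ≤ ((4 * Real.exp 1 * (1 + ε) / ε) ^ n) ^ k * S := by
  induction n generalizing S with
  | zero =>
    rw [Subsingleton.elim α 0, pow_zero, one_pow, one_mul, ← constantCoeff_eq,
      ← eval_zero]
    simpa only [Subsingleton.elim _ (0 : Fin 0 → ℂ)] using hS 0 finZeroElim
  | succ n ih =>
    set q := (finSuccEquiv ℂ n p).coeff (α 0)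
    have hq : q.totalDegree ≤ k := (totalDegree_coeff_finSuccEquiv_le p _).trans hp
    calc ‖coeff α p‖ = ‖coeff (Finsupp.tail α) q‖ := by
          rw [finSuccEquiv_coeff_coeff, Finsupp.cons_tail]
      _ ≤ ((4 * Real.exp 1 * (1 + ε) / ε) ^ n) ^ k * ((4 * Real.exp 1 * (1 + ε) / ε) ^ k * S) :=
          ih hq (norm_eval_coeff_finSuccEquiv_le hε
            ((degreeOf_le_totalDegree p 0).trans hp) hS (α 0)) _
      _ = ((4 * Real.exp 1 * (1 + ε) / ε) ^ (n + 1)) ^ k * S := by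
          rw [← mul_assoc, ← mul_pow, pow_succ]

end MvPolynomial

theorem bddAbove_range_norm_eval_cube {n : ℕ} (p : MvPolynomial (Fin n) ℂ) (ε : ℝ) :
    BddAbove (Set.range fun t : {t : Fin n → ℝ // ∀ i, |t i| ≤ ε} =>
      ‖MvPolynomial.eval (fun i => ((t : Fin n → ℝ) i : ℂ)) p‖) := by
  have hcube : {t : Fin n → ℝ | ∀ i, |t i| ≤ ε} = Set.univ.pi fun _ => Set.Icc (-ε) ε := by
    ext t; simp only [Set.mem_ofPred_eq, Set.mem_univ_pi, Set.mem_Icc, abs_le]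
  have hK : IsCompact {t : Fin n → ℝ | ∀ i, |t i| ≤ ε} := by
    rw [hcube]; exact isCompact_univ_pi fun _ => isCompact_Icc
  have hf : Continuous fun t : Fin n → ℝ => ‖MvPolynomial.eval (fun i => (t i : ℂ)) p‖ :=
    ((MvPolynomial.continuous_eval p).comp (by fun_prop)).norm
  have hbdd := (hK.image hf).bddAbove
  rwa [Set.image_eq_range] at hbdd

theorem mv_coeff_bound_of_sup_on_small_cube_general (n : ℕ) (ε : ℝ) (hε : 0 < ε) :
    ∃ R : ℝ, 0 < R ∧
      ∀ (k : ℕ) (p : MvPolynomial (Fin n) ℂ), p.totalDegree ≤ k →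
        ∀ α : Fin n →₀ ℕ, ‖MvPolynomial.coeff α p‖ ≤
          R ^ k * ⨆ t : {t : Fin n → ℝ // ∀ i, |t i| ≤ ε},
            ‖MvPolynomial.eval (fun i => ((t : Fin n → ℝ) i : ℂ)) p‖ := by
  refine ⟨(4 * Real.exp 1 * (1 + ε) / ε) ^ n, by positivity, fun k p hp α => ?_⟩
  exact MvPolynomial.norm_coeff_le_of_norm_eval_le hε n hp
    (fun t ht => le_ciSup (bddAbove_range_norm_eval_cube p ε) ⟨t, ht⟩) α

/-- The rescaled version of Lemma 2.3 of Eastwood–Graham: for each `n ≥ 1` and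
each `ε > 0` there is a constant `R > 0` (depending on `n` and `ε`) such that
for every polynomial `p(t) = ∑_{|α| ≤ k} c_α t^α` on `ℝ^n` of total degree at
most `k` with complex coefficients, every coefficient satisfies
`|c_α| ≤ R ^ k * sup { |p(t)| : |t₁| ≤ ε, …, |tₙ| ≤ ε }`. -/
theorem mv_coeff_bound_of_sup_on_small_cube (n : ℕ) (hn : 1 ≤ n) (ε : ℝ) (hε : 0 < ε) :
    ∃ R : ℝ, 0 < R ∧
      ∀ (k : ℕ) (p : MvPolynomial (Fin n) ℂ), p.totalDegree ≤ k →
        ∀ α : Fin n →₀ ℕ, ‖MvPolynomial.coeff α p‖ ≤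
          R ^ k * ⨆ t : {t : Fin n → ℝ // ∀ i, |t i| ≤ ε},
            ‖MvPolynomial.eval (fun i => ((t : Fin n → ℝ) i : ℂ)) p‖ :=
  mv_coeff_bound_of_sup_on_small_cube_general n ε hε
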